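/- arXiv:2208.05656 — 2 statements merged into one kernel-verified Lean document; each statement's English description precedes it below -/
import Mathlib

section
/- Let P, Q be Borel probability measures on ℝ^T with finite p-th moment (1 < p < ∞) and let π be a causal coupling between P and Q (i.e., conditionally on X_1,...,X_t, the variables Y_1,...,Y_t are independent of X_{t+1},...,X_T under π). Then for every δ > 0 there exists a map Y^δ : ℝ^T × ℝ^T → ℝ^T such that for each t ∈ {1,...,T}: Y^δ_t is measurable with respect to σ(X_1,...,X_t,Y_1,...,Y_t), X_t is σ(Y^δ_t)-measurable, and |Y^δ_t − Y_t| ≤ δ pointwise. In particular π^δ := (X,Y^δ)_*π is a bicausal coupling between P and Q^δ := Y^δ_*π. -/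
open MeasureTheory ProbabilityTheory Filter Set

noncomputable section

abbrev PathSp (T : ℕ) := Fin T → ℝ

/-- σ-algebra generated by the first `t` coordinates `X_1,…,X_t` on path space. -/
def FX (T t : ℕ) : MeasurableSpace (PathSp T) :=
  ⨆ i : Fin T, ⨆ _ : (i : ℕ) < t, MeasurableSpace.comap (fun x => x i) inferInstance

def prodX (T t : ℕ) : MeasurableSpace (PathSp T × PathSp T) := (FX T t).comap Prod.fst

def prodY (T t : ℕ) : MeasurableSpace (PathSp T × PathSp T) := (FX T t).comap Prod.snd

def prodXY (T t : ℕ) : MeasurableSpace (PathSp T × PathSp T) := prodX T t ⊔ prodY T t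

def IsCoupling {T : ℕ} (π : Measure (PathSp T × PathSp T)) (P Q : Measure (PathSp T)) : Prop :=
  π.map Prod.fst = P ∧ π.map Prod.snd = Q

/-- Causality of a coupling: conditionally on `X_1,…,X_t`, the variables `Y_1,…,Y_t`
are independent of `X_1,…,X_T`. -/
def Causal (T : ℕ) (π : Measure (PathSp T × PathSp T)) : Prop :=
  ∀ t ≤ T, ∀ A : Set (PathSp T), MeasurableSet[FX T t] A →
    (π[fun z => A.indicator (fun _ => (1:ℝ)) z.2 | prodX T T]) =ᵐ[π]
    (π[fun z => A.indicator (fun _ => (1:ℝ)) z.2 | prodX T t])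

def Bicausal (T : ℕ) (π : Measure (PathSp T × PathSp T)) : Prop :=
  Causal T π ∧ ∀ t ≤ T, ∀ A : Set (PathSp T), MeasurableSet[FX T t] A →
    (π[fun z => A.indicator (fun _ => (1:ℝ)) z.1 | prodY T T]) =ᵐ[π]
    (π[fun z => A.indicator (fun _ => (1:ℝ)) z.1 | prodY T t])

/-- `P` has a finite `p`-th moment. -/
def FiniteMoment {T : ℕ} (p : ℝ) (P : Measure (PathSp T)) : Prop :=
  ∀ t : Fin T, MemLp (fun x => x t) (ENNReal.ofReal p) P

/-- The adapted Wasserstein distance of order `p`. -/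
def AW (T : ℕ) (p : ℝ) (P Q : Measure (PathSp T)) : ℝ :=
  sInf { r | ∃ π : Measure (PathSp T × PathSp T), IsCoupling π P Q ∧ Bicausal T π ∧
    r = (∑ t : Fin T, ∫ z, |z.1 t - z.2 t| ^ p ∂π) ^ (1 / p) }

/-- The closed ball of radius `r` around `P` in the adapted Wasserstein distance,
within the set of probability measures with finite `p`-th moment. -/
def AWball (T : ℕ) (p : ℝ) (P : Measure (PathSp T)) (r : ℝ) : Set (Measure (PathSp T)) :=
  { Q | IsProbabilityMeasure Q ∧ FiniteMoment p Q ∧ AW T p P Q ≤ r }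

/-- Partial derivative `∂_{x_t} f`. -/
def pd {T : ℕ} (f : PathSp T → ℝ) (x : PathSp T) (t : Fin T) : ℝ :=
  fderiv ℝ f x (Pi.single t 1)

/-!
Put `Yδ_t := δ ⌊Y_t / δ⌋ + δ ψ(X_t)` with `ψ = 1/2 + arctan / π : ℝ → [0, 1)`: it stays within `δ`
of `Y_t`, depends only on `(X_t, Y_t)`, and `X_t = ψ⁻¹(fract (Yδ_t / δ))`. Causality of
`(X, Yδ)` thus reduces to causality of `π` once conditional independence of `σ(Y_{1:t})` and
`σ(X)` given `σ(X_{1:t})` is extended, by a π-λ argument, to `σ(X_{1:t}, Y_{1:t})`. The reverse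
condition is trivial because `X_{1:t}` is a measurable function of `Yδ_{1:t}`.
-/

open MeasurableSpace

theorem MeasurableSpace.isPiSystem_image2_inter {Ω : Type*} (m k : MeasurableSpace Ω) :
    IsPiSystem (image2 (· ∩ ·) {u | MeasurableSet[m] u} {v | MeasurableSet[k] v}) := by
  rintro _ ⟨u₁, hu₁, v₁, hv₁, rfl⟩ _ ⟨u₂, hu₂, v₂, hv₂, rfl⟩ -
  exact ⟨u₁ ∩ u₂, hu₁.inter hu₂, v₁ ∩ v₂, hv₁.inter hv₂,
    inter_inter_inter_comm _ _ _ _⟩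

theorem MeasurableSpace.sup_eq_generateFrom_image2_inter {Ω : Type*} (m k : MeasurableSpace Ω) :
    m ⊔ k =
      generateFrom (image2 (· ∩ ·) {u | MeasurableSet[m] u} {v | MeasurableSet[k] v}) := by
  refine le_antisymm (sup_le (fun u hu => ?_) (fun v hv => ?_)) (generateFrom_le ?_)
  · exact measurableSet_generateFrom ⟨u, hu, univ, .univ, inter_univ u⟩
  · exact measurableSet_generateFrom ⟨univ, .univ, v, hv, univ_inter v⟩
  · rintro _ ⟨u, hu, v, hv, rfl⟩
    exact (le_sup_left (a := m) u hu).inter (le_sup_right (b := k) v hv)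

section CondExp

variable {Ω : Type*} {m n k m₀ : MeasurableSpace Ω} {μ : Measure Ω} [IsFiniteMeasure μ]

theorem setIntegral_condExp_eq_integral_condExp_indicator_mul (hm : m ≤ m₀) (f : Ω → ℝ)
    {s : Set Ω} (hs : MeasurableSet s) :
    ∫ ω in s, μ[f|m] ω ∂μ = ∫ ω, μ[s.indicator 1|m] ω * μ[f|m] ω ∂μ := by
  have hind : s.indicator (μ[f|m]) = s.indicator 1 * μ[f|m] := by
    ext ω; by_cases hω : ω ∈ s <;> simp [hω]
  calc ∫ ω in s, μ[f|m] ω ∂μ = ∫ ω, μ[s.indicator 1 * μ[f|m] | m] ω ∂μ := by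
        rw [integral_condExp hm, ← hind, integral_indicator hs]
    _ = ∫ ω, μ[s.indicator 1|m] ω * μ[f|m] ω ∂μ := integral_congr_ae <|
        condExp_mul_of_stronglyMeasurable_right stronglyMeasurable_condExp
          (hind ▸ integrable_condExp.indicator hs) ((integrable_const 1).indicator hs)

theorem setIntegral_condExp_indicator_comm (hm : m ≤ m₀) {s c : Set Ω} (hs : MeasurableSet s)
    (hc : MeasurableSet c) :
    ∫ ω in s, μ[c.indicator (1 : Ω → ℝ)|m] ω ∂μ =
      ∫ ω in c, μ[s.indicator (1 : Ω → ℝ)|m] ω ∂μ := by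
  simp_rw [setIntegral_condExp_eq_integral_condExp_indicator_mul hm _ hs,
    setIntegral_condExp_eq_integral_condExp_indicator_mul hm _ hc, mul_comm]

theorem setIntegral_inter_condExp_indicator_eq_measureReal (hmn : m ≤ n) (hn : n ≤ m₀)
    (hk : k ≤ m₀)
    (h : ∀ v, MeasurableSet[k] v →
      μ[v.indicator (1 : Ω → ℝ)|n] =ᵐ[μ] μ[v.indicator (1 : Ω → ℝ)|m])
    {s u v : Set Ω} (hs : MeasurableSet[n] s) (hu : MeasurableSet[m] u)
    (hv : MeasurableSet[k] v) :
    ∫ ω in u ∩ v, μ[s.indicator (1 : Ω → ℝ)|m] ω ∂μ = μ.real (u ∩ v ∩ s) := by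
  have hm := hmn.trans hn
  have hus : MeasurableSet[n] (u ∩ s) := (hmn u hu).inter hs
  have hpull :
      μ[(u ∩ s).indicator (1 : Ω → ℝ)|m] =ᵐ[μ] u.indicator (μ[s.indicator 1|m]) := by
    rw [← indicator_indicator]
    exact condExp_indicator ((integrable_const 1).indicator (hn s hs)) hu
  calc ∫ ω in u ∩ v, μ[s.indicator (1 : Ω → ℝ)|m] ω ∂μ
      = ∫ ω in v, μ[(u ∩ s).indicator (1 : Ω → ℝ)|m] ω ∂μ := by
        rw [inter_comm, ← setIntegral_indicator (hm u hu)]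
        exact setIntegral_congr_ae (hk v hv) (hpull.mono fun ω hω _ => hω.symm)
    _ = ∫ ω in u ∩ s, μ[v.indicator (1 : Ω → ℝ)|n] ω ∂μ := by
        rw [setIntegral_condExp_indicator_comm hm (hk v hv) (hn _ hus)]
        exact setIntegral_congr_ae (hn _ hus) ((h v hv).mono fun ω hω _ => hω.symm)
    _ = μ.real (u ∩ v ∩ s) := by
        rw [setIntegral_condExp hn ((integrable_const 1).indicator (hk v hv)) hus,
          integral_indicator_one (hk v hv), measureReal_restrict_apply (hk v hv)]
        congr 1
        ac_rfl

theorem setIntegral_condExp_indicator_eq_measureReal_of_sup (hmn : m ≤ n) (hn : n ≤ m₀)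
    (hk : k ≤ m₀)
    (h : ∀ v, MeasurableSet[k] v →
      μ[v.indicator (1 : Ω → ℝ)|n] =ᵐ[μ] μ[v.indicator (1 : Ω → ℝ)|m])
    {s c : Set Ω} (hs : MeasurableSet[n] s) (hc : MeasurableSet[m ⊔ k] c) :
    ∫ ω in c, μ[s.indicator (1 : Ω → ℝ)|m] ω ∂μ = μ.real (c ∩ s) := by
  have hmk : m ⊔ k ≤ m₀ := sup_le (hmn.trans hn) hk
  set g := μ[s.indicator (1 : Ω → ℝ)|m]
  have hg : 0 ≤ᵐ[μ] g := condExp_nonneg (ae_of_all _ (indicator_nonneg fun _ _ => zero_le_one))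
  have hdensity : ∀ c, MeasurableSet c →
      μ.withDensity (fun ω => ENNReal.ofReal (g ω)) c =
        ENNReal.ofReal (∫ ω in c, g ω ∂μ) :=
    fun c hc => by rw [withDensity_apply _ hc, ofReal_integral_eq_lintegral_ofReal
      integrable_condExp.integrableOn (ae_restrict_of_ae hg)]
  -- Both sides are finite measures in `c`, and they agree on the π-system of sets `u ∩ v`.
  have hgen : ∀ c ∈ image2 (· ∩ ·) {u | MeasurableSet[m] u} {v | MeasurableSet[k] v},
      μ.restrict s c = μ.withDensity (fun ω => ENNReal.ofReal (g ω)) c := by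
    rintro _ ⟨u, hu, v, hv, rfl⟩
    have huv : MeasurableSet (u ∩ v) := (hmn.trans hn u hu).inter (hk v hv)
    rw [hdensity _ huv, Measure.restrict_apply huv, ← ofReal_measureReal,
      setIntegral_inter_condExp_indicator_eq_measureReal hmn hn hk h hs hu hv]
  have hext := ext_on_measurableSpace_of_generate_finite m₀ _ hgen hmk
    (sup_eq_generateFrom_image2_inter m k) (isPiSystem_image2_inter m k)
    (by simpa using hgen univ ⟨univ, .univ, univ, .univ, univ_inter univ⟩) hc
  rw [hdensity _ (hmk c hc), Measure.restrict_apply (hmk c hc), ← ofReal_measureReal] at hext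
  exact ((ENNReal.ofReal_eq_ofReal_iff measureReal_nonneg
    (setIntegral_nonneg_ae (hmk c hc) (hg.mono fun _ h _ => h))).1 hext).symm

-- For `m ≤ n`, the hypothesis says that `k` and `n` are conditionally independent given `m`;
-- the conclusion says the same of `m ⊔ k` and `n`.
theorem condExp_indicator_ae_eq_of_sup (hmn : m ≤ n) (hn : n ≤ m₀) (hk : k ≤ m₀)
    (h : ∀ v, MeasurableSet[k] v →
      μ[v.indicator (1 : Ω → ℝ)|n] =ᵐ[μ] μ[v.indicator (1 : Ω → ℝ)|m])
    {c : Set Ω} (hc : MeasurableSet[m ⊔ k] c) :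
    μ[c.indicator (1 : Ω → ℝ)|n] =ᵐ[μ] μ[c.indicator (1 : Ω → ℝ)|m] := by
  have hc₀ : MeasurableSet c := sup_le (hmn.trans hn) hk c hc
  refine (ae_eq_condExp_of_forall_setIntegral_eq hn ((integrable_const 1).indicator hc₀)
    (fun _ _ _ => integrable_condExp.integrableOn) (fun s hs _ => ?_)
    (stronglyMeasurable_condExp.mono hmn).aestronglyMeasurable).symm
  rw [setIntegral_condExp_indicator_comm (hmn.trans hn) (hn s hs) hc₀,
    setIntegral_condExp_indicator_eq_measureReal_of_sup hmn hn hk h hs hc,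
    integral_indicator_one hc₀, measureReal_restrict_apply hc₀]

end CondExp

section Map

variable {α β : Type*} {mα : MeasurableSpace α} {m m₁ m₂ mβ : MeasurableSpace β}
  {μ : Measure α} [IsFiniteMeasure μ] {Φ : α → β}

theorem condExp_map_comp_ae_eq (hΦ : Measurable Φ) (hm : m ≤ mβ) {f : β → ℝ}
    (hf : Integrable f (μ.map Φ)) :
    (μ.map Φ)[f|m] ∘ Φ =ᵐ[μ] μ[f ∘ Φ|m.comap Φ] := by
  have hcondExp : AEStronglyMeasurable ((μ.map Φ)[f|m]) (μ.map Φ) :=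
    (stronglyMeasurable_condExp.mono hm).aestronglyMeasurable
  refine ae_eq_condExp_of_forall_setIntegral_eq ((comap_mono hm).trans hΦ.comap_le)
    ((integrable_map_measure hf.aestronglyMeasurable hΦ.aemeasurable).mp hf)
    (fun _ _ _ => ((integrable_map_measure hcondExp hΦ.aemeasurable).mp
      integrable_condExp).integrableOn) ?_
    (stronglyMeasurable_condExp.comp_measurable (comap_measurable Φ)).aestronglyMeasurable
  rintro _ ⟨s, hs, rfl⟩ -
  simp only [Function.comp_apply]
  rw [← setIntegral_map (hm s hs) hcondExp hΦ.aemeasurable,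
    ← setIntegral_map (hm s hs) hf.aestronglyMeasurable hΦ.aemeasurable,
    setIntegral_condExp hm hf hs]

theorem condExp_map_ae_eq_of_comp (hΦ : Measurable Φ)
    (hm₁ : m₁ ≤ mβ) (hm₂ : m₂ ≤ mβ) {f : β → ℝ} (hf : Integrable f (μ.map Φ))
    (h : μ[f ∘ Φ|m₁.comap Φ] =ᵐ[μ] μ[f ∘ Φ|m₂.comap Φ]) :
    (μ.map Φ)[f|m₁] =ᵐ[μ.map Φ] (μ.map Φ)[f|m₂] := by
  rw [EventuallyEq, ae_map_iff hΦ.aemeasurable (measurableSet_eq_fun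
    (stronglyMeasurable_condExp.mono hm₁).measurable
    (stronglyMeasurable_condExp.mono hm₂).measurable)]
  filter_upwards [condExp_map_comp_ae_eq hΦ hm₁ hf, condExp_map_comp_ae_eq hΦ hm₂ hf, h]
    with a h₁ h₂ h₁₂
  exact h₁.trans (h₁₂.trans h₂.symm)

end Map

section PathSpace

variable {T : ℕ}

theorem FX_le (t : ℕ) : FX T t ≤ MeasurableSpace.pi :=
  iSup₂_le fun i _ => (measurable_pi_apply i).comap_le

theorem FX_mono : Monotone (FX T) := fun _ _ hst =>
  iSup₂_mono' fun i hi => ⟨i, hi.trans_le hst, le_rfl⟩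

theorem measurable_apply_FX {t : ℕ} {i : Fin T} (hi : (i : ℕ) < t) :
    Measurable[FX T t] fun x : PathSp T => x i :=
  Measurable.of_comap_le (le_iSup₂_of_le i hi le_rfl)

theorem measurable_FX_of_forall_apply {Ω : Type*} {m : MeasurableSpace Ω} {t : ℕ}
    {f : Ω → PathSp T} (h : ∀ i : Fin T, (i : ℕ) < t → Measurable[m] fun ω => f ω i) :
    Measurable[m, FX T t] f := by
  refine Measurable.of_comap_le ?_
  simp only [FX, MeasurableSpace.comap_iSup, MeasurableSpace.comap_comp]
  exact iSup₂_le fun i hi => (h i hi).comap_le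

theorem prodX_le (t : ℕ) : prodX T t ≤ Prod.instMeasurableSpace :=
  (comap_mono (FX_le t)).trans measurable_fst.comap_le

theorem prodY_le (t : ℕ) : prodY T t ≤ Prod.instMeasurableSpace :=
  (comap_mono (FX_le t)).trans measurable_snd.comap_le

theorem prodX_mono : Monotone (prodX T) := fun _ _ h => comap_mono (FX_mono h)

theorem prodY_mono : Monotone (prodY T) := fun _ _ h => comap_mono (FX_mono h)

theorem measurable_fst_prodX (t : ℕ) :
    Measurable[prodX T t, FX T t] (Prod.fst : PathSp T × PathSp T → PathSp T) :=
  comap_measurable _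

theorem measurable_snd_prodY (t : ℕ) :
    Measurable[prodY T t, FX T t] (Prod.snd : PathSp T × PathSp T → PathSp T) :=
  comap_measurable _

theorem IsCoupling.map_prodMk {π : Measure (PathSp T × PathSp T)} {P Q : Measure (PathSp T)}
    (hπ : IsCoupling π P Q) {F : PathSp T × PathSp T → PathSp T} (hF : Measurable F) :
    IsCoupling (π.map fun z => (z.1, F z)) P (π.map F) := by
  constructor
  · rw [Measure.map_map measurable_fst (measurable_fst.prodMk hF)]
    exact hπ.1
  · rw [Measure.map_map measurable_snd (measurable_fst.prodMk hF)]
    rfl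

theorem Causal.map_prodMk {π : Measure (PathSp T × PathSp T)} [IsFiniteMeasure π]
    (hπ : Causal T π) {F : PathSp T × PathSp T → PathSp T} (hF : Measurable F)
    (hF_adapted : ∀ t ≤ T, Measurable[prodXY T t, FX T t] F) :
    Causal T (π.map fun z => (z.1, F z)) := by
  intro t ht A hA
  have hcomap : ∀ s, (prodX T s).comap (fun z : PathSp T × PathSp T => (z.1, F z)) = prodX T s :=
    fun s => by simp only [prodX, comap_comp]; rfl
  refine condExp_map_ae_eq_of_comp (measurable_fst.prodMk hF) (prodX_le T) (prodX_le t)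
    ((integrable_const 1).indicator ((FX_le t A hA).preimage measurable_snd)) ?_
  rw [hcomap, hcomap]
  refine condExp_indicator_ae_eq_of_sup (prodX_mono ht) (prodX_le T) (prodY_le t)
    ?_ (hF_adapted t ht hA)
  rintro _ ⟨B, hB, rfl⟩
  exact hπ t ht B hB

theorem Causal.bicausal_of_ae_fst_eq {ν : Measure (PathSp T × PathSp T)} [IsFiniteMeasure ν]
    (hν : Causal T ν) {G : PathSp T → PathSp T} (hG : ∀ t, Measurable[FX T t, FX T t] G)
    (hfst : ∀ᵐ z ∂ν, z.1 = G z.2) : Bicausal T ν := by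
  refine ⟨hν, fun t ht A hA => ?_⟩
  have hGA : MeasurableSet[prodY T t] ((G ∘ Prod.snd) ⁻¹' A) :=
    ((hG t).comp (measurable_snd_prodY t)) hA
  set g := ((G ∘ Prod.snd) ⁻¹' A).indicator fun _ => (1 : ℝ)
  have hfg : (fun z => A.indicator (fun _ => (1 : ℝ)) z.1) =ᵐ[ν] g :=
    hfst.mono fun z hz => by simp only [g, hz]; rfl
  have hg_int : Integrable g ν := (integrable_const 1).indicator (prodY_le t _ hGA)
  have hg : StronglyMeasurable[prodY T t] g := stronglyMeasurable_const.indicator hGA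
  calc ν[fun z => A.indicator (fun _ => (1 : ℝ)) z.1 | prodY T T]
      =ᵐ[ν] ν[g|prodY T T] := condExp_congr_ae hfg
    _ = g := condExp_of_stronglyMeasurable (prodY_le T) (hg.mono (prodY_mono ht)) hg_int
    _ = ν[g|prodY T t] := (condExp_of_stronglyMeasurable (prodY_le t) hg hg_int).symm
    _ =ᵐ[ν] ν[fun z => A.indicator (fun _ => (1 : ℝ)) z.1 | prodY T t] :=
      (condExp_congr_ae hfg).symm

end PathSpace

section Encoding

open Real

def squash (x : ℝ) : ℝ := 1 / 2 + arctan x / π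

def unsquash (u : ℝ) : ℝ := tan (π * (u - 1 / 2))

theorem squash_mem_Ico (x : ℝ) : squash x ∈ Ico 0 1 := by
  have h₁ := neg_pi_div_two_lt_arctan x
  have h₂ := arctan_lt_pi_div_two x
  have h₃ : -(1 / 2) < arctan x / π := by rw [lt_div_iff₀ pi_pos]; linarith
  have h₄ : arctan x / π < 1 / 2 := by rw [div_lt_iff₀ pi_pos]; linarith
  exact ⟨by rw [squash]; linarith, by rw [squash]; linarith⟩

theorem unsquash_squash (x : ℝ) : unsquash (squash x) = x := by
  rw [unsquash, squash, add_sub_cancel_left, mul_div_cancel₀ _ pi_ne_zero, tan_arctan]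

theorem measurable_squash : Measurable squash := by
  unfold squash; fun_prop

theorem measurable_unsquash : Measurable unsquash := by
  unfold unsquash; simp_rw [tan_eq_sin_div_cos]; fun_prop

def encode (δ x y : ℝ) : ℝ := δ * (⌊y / δ⌋ + squash x)

def decode (δ w : ℝ) : ℝ := unsquash (Int.fract (w / δ))

theorem decode_encode {δ : ℝ} (hδ : δ ≠ 0) (x y : ℝ) : decode δ (encode δ x y) = x := by
  rw [decode, encode, mul_div_cancel_left₀ _ hδ, Int.fract_intCast_add,
    Int.fract_eq_self.2 (squash_mem_Ico x), unsquash_squash]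

theorem abs_encode_sub_le {δ : ℝ} (hδ : 0 < δ) (x y : ℝ) : |encode δ x y - y| ≤ δ := by
  have hy : y = δ * (⌊y / δ⌋ + Int.fract (y / δ)) := by
    rw [Int.floor_add_fract, mul_div_cancel₀ _ hδ.ne']
  have hsub : encode δ x y - y = δ * (squash x - Int.fract (y / δ)) := by
    rw [encode]; linear_combination (-1 : ℝ) * hy
  have hx := squash_mem_Ico x
  rw [hsub, abs_mul, abs_of_pos hδ]
  refine mul_le_of_le_one_right hδ.le (abs_le.2 ⟨?_, ?_⟩)
  · linarith [hx.1, Int.fract_lt_one (y / δ)]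
  · linarith [hx.2, Int.fract_nonneg (y / δ)]

theorem Measurable.encode {α : Type*} {m : MeasurableSpace α} {f g : α → ℝ} (δ : ℝ)
    (hf : Measurable f) (hg : Measurable g) : Measurable fun a => encode δ (f a) (g a) :=
  ((measurable_from_top.comp (Int.measurable_floor.comp (hg.div_const δ))).add
    (measurable_squash.comp hf)).const_mul δ

theorem measurable_decode (δ : ℝ) : Measurable (decode δ) :=
  measurable_unsquash.comp (measurable_id.div_const δ).fract

end Encoding

section Coupling

variable {T : ℕ}

def encodePath (δ : ℝ) (z : PathSp T × PathSp T) : PathSp T :=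
  fun t => encode δ (z.1 t) (z.2 t)

def decodePath (δ : ℝ) (y : PathSp T) : PathSp T := fun t => decode δ (y t)

theorem measurable_encodePath (δ : ℝ) : Measurable (encodePath (T := T) δ) :=
  measurable_pi_lambda _ fun t =>
    .encode δ ((measurable_pi_apply t).comp measurable_fst)
      ((measurable_pi_apply t).comp measurable_snd)

theorem measurable_decodePath (δ : ℝ) : Measurable (decodePath (T := T) δ) :=
  measurable_pi_lambda _ fun t => (measurable_decode δ).comp (measurable_pi_apply t)

theorem measurable_encodePath_prodXY (δ : ℝ) (t : ℕ) :
    Measurable[prodXY T t, FX T t] (encodePath δ) :=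
  measurable_FX_of_forall_apply fun _ hi => .encode δ
    (((measurable_apply_FX hi).comp (measurable_fst_prodX t)).mono le_sup_left le_rfl)
    (((measurable_apply_FX hi).comp (measurable_snd_prodY t)).mono le_sup_right le_rfl)

theorem measurable_decodePath_FX (δ : ℝ) (t : ℕ) :
    Measurable[FX T t, FX T t] (decodePath δ) :=
  measurable_FX_of_forall_apply fun _ hi => (measurable_decode δ).comp (measurable_apply_FX hi)

theorem decodePath_encodePath {δ : ℝ} (hδ : δ ≠ 0) (z : PathSp T × PathSp T) :
    decodePath δ (encodePath δ z) = z.1 :=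
  funext fun _ => decode_encode hδ _ _

end Coupling

theorem causal_to_bicausal_approx_general
    (T : ℕ)
    (P Q : Measure (PathSp T))
    (π : Measure (PathSp T × PathSp T)) [IsProbabilityMeasure π]
    (hπ : IsCoupling π P Q) (hcausal : Causal T π)
    (δ : ℝ) (hδ : 0 < δ) :
    ∃ Yδ : PathSp T × PathSp T → PathSp T,
      Measurable Yδ ∧
      (∀ t : Fin T, Measurable[prodXY T ((t : ℕ) + 1)] fun z => Yδ z t) ∧
      (∀ t : Fin T, ∃ ρ : ℝ → ℝ, Measurable ρ ∧ ∀ z, ρ (Yδ z t) = z.1 t) ∧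
      (∀ t : Fin T, ∀ z, |Yδ z t - z.2 t| ≤ δ) ∧
      IsCoupling (π.map fun z => (z.1, Yδ z)) P (π.map Yδ) ∧
      Bicausal T (π.map fun z => (z.1, Yδ z)) := by
  have hΦ : Measurable fun z : PathSp T × PathSp T => (z.1, encodePath δ z) :=
    measurable_fst.prodMk (measurable_encodePath δ)
  have hdecode : ∀ᵐ z ∂π.map (fun z => (z.1, encodePath δ z)), z.1 = decodePath δ z.2 :=
    (ae_map_iff hΦ.aemeasurable (measurableSet_eq_fun measurable_fst
      ((measurable_decodePath δ).comp measurable_snd))).2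
        (ae_of_all _ fun z => (decodePath_encodePath hδ.ne' z).symm)
  refine ⟨encodePath δ, measurable_encodePath δ,
    fun t => (measurable_apply_FX t.val.lt_succ_self).comp (measurable_encodePath_prodXY δ _),
    fun _ => ⟨decode δ, measurable_decode δ, fun _ => decode_encode hδ.ne' _ _⟩,
    fun _ _ => abs_encode_sub_le hδ _ _, hπ.map_prodMk (measurable_encodePath δ),
    (hcausal.map_prodMk (measurable_encodePath δ) fun t _ => measurable_encodePath_prodXY δ t)
      |>.bicausal_of_ae_fst_eq (measurable_decodePath_FX δ) hdecode⟩

/-- a causal coupling can be modified into a bicausal one: for every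
δ > 0 there is Yδ with Yδ_t being ℱ_t^{X,Y}-measurable, X_t being σ(Yδ_t)-measurable,
|Yδ_t - Y_t| ≤ δ, and (X,Yδ)_*π a bicausal coupling between P and Yδ_*π. -/
theorem causal_to_bicausal_approx
    (T : ℕ) (p : ℝ) (hp : 1 < p)
    (P Q : Measure (PathSp T)) [IsProbabilityMeasure P] [IsProbabilityMeasure Q]
    (hPm : FiniteMoment p P) (hQm : FiniteMoment p Q)
    (π : Measure (PathSp T × PathSp T)) [IsProbabilityMeasure π]
    (hπ : IsCoupling π P Q) (hcausal : Causal T π)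
    (δ : ℝ) (hδ : 0 < δ) :
    ∃ Yδ : PathSp T × PathSp T → PathSp T,
      Measurable Yδ ∧
      (∀ t : Fin T, Measurable[prodXY T ((t : ℕ) + 1)] fun z => Yδ z t) ∧
      (∀ t : Fin T, ∃ ρ : ℝ → ℝ, Measurable ρ ∧ ∀ z, ρ (Yδ z t) = z.1 t) ∧
      (∀ t : Fin T, ∀ z, |Yδ z t - z.2 t| ≤ δ) ∧
      IsCoupling (π.map fun z => (z.1, Yδ z)) P (π.map Yδ) ∧
      Bicausal T (π.map fun z => (z.1, Yδ z)) :=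
  causal_to_bicausal_approx_general T P Q π hπ hcausal δ hδ

end
end

section
/- For every δ > 0 there exist Borel maps ψ_δ : ℝ → (0,δ) and φ_δ : ℝ → δℤ such that ψ_δ is a Borel isomorphism onto its image, φ_δ(x) = max{δk : k ∈ ℤ, δk ≤ x}, and the map y_δ(u,v) := φ_δ(v) + ψ_δ(u) satisfies: (i) u is σ(y_δ(u,v))-measurably recoverable from y_δ(u,v) (i.e., there is a Borel map ρ with ρ(y_δ(u,v)) = u for all u,v ∈ ℝ), and (ii) |y_δ(u,v) − v| ≤ δ for all u,v ∈ ℝ. -/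
/-!
Squeeze ℝ into `(0, 1)` by the Borel isomorphism `u ↦ arctan u / π + 1/2` and scale by `δ`
to get `ψ`. Adding `ψ u ∈ (0, δ)` to the grid point `δ⌊v/δ⌋` does not leave the cell
`[δ⌊v/δ⌋, δ⌊v/δ⌋ + δ)` of `v`, so `y` is within `δ` of `v`, and `u` is read back from the
fractional part of `y / δ` through `tan`.
-/

open MeasureTheory Set Real

section GridFloor

variable {δ : ℝ}

theorem mul_floor_div_le (hδ : 0 < δ) (x : ℝ) : δ * ⌊x / δ⌋ ≤ x :=
  (le_div_iff₀' hδ).1 (Int.floor_le _)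

theorem lt_mul_floor_div_add (hδ : 0 < δ) (x : ℝ) : x < δ * ⌊x / δ⌋ + δ := by
  simpa [mul_add] using (div_lt_iff₀' hδ).1 (Int.lt_floor_add_one (x / δ))

theorem mul_intCast_le_mul_floor_div (hδ : 0 < δ) {x : ℝ} {k : ℤ} (hk : δ * k ≤ x) :
    δ * k ≤ δ * ⌊x / δ⌋ := by
  gcongr
  exact_mod_cast Int.le_floor.2 ((le_div_iff₀' hδ).2 hk)

theorem abs_mul_floor_div_add_mul_sub_le (hδ : 0 < δ) (v : ℝ) {s : ℝ}
    (hs : s ∈ Icc (0 : ℝ) 1) : |δ * ⌊v / δ⌋ + δ * s - v| ≤ δ := by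
  have h₀ : 0 ≤ δ * s := mul_nonneg hδ.le hs.1
  have h₁ : δ * s ≤ δ := mul_le_of_le_one_right hδ.le hs.2
  rw [abs_le]
  constructor <;> linarith [mul_floor_div_le hδ v, lt_mul_floor_div_add hδ v]

theorem fract_mul_intCast_add_mul_div (hδ : δ ≠ 0) (n : ℤ) {s : ℝ}
    (hs : s ∈ Ico (0 : ℝ) 1) : Int.fract ((δ * n + δ * s) / δ) = s := by
  rw [← mul_add, mul_div_cancel_left₀ _ hδ, Int.fract_intCast_add, Int.fract_eq_self.2 hs]

end GridFloor

noncomputable def arctanUnit (u : ℝ) : ℝ := arctan u / π + 1 / 2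

noncomputable def tanUnit (s : ℝ) : ℝ := tan (π * (s - 1 / 2))

theorem arctanUnit_mem_Ioo (u : ℝ) : arctanUnit u ∈ Ioo (0 : ℝ) 1 := by
  have h₁ := neg_pi_div_two_lt_arctan u
  have h₂ := arctan_lt_pi_div_two u
  constructor
  · have : -(1 / 2) < arctan u / π := by rw [lt_div_iff₀ pi_pos]; linarith
    unfold arctanUnit; linarith
  · have : arctan u / π < 1 / 2 := by rw [div_lt_iff₀ pi_pos]; linarith
    unfold arctanUnit; linarith

theorem tanUnit_arctanUnit : Function.LeftInverse tanUnit arctanUnit := fun u => by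
  simp only [tanUnit, arctanUnit, add_sub_cancel_right, mul_div_cancel₀ _ pi_ne_zero,
    tan_arctan]

theorem continuous_arctanUnit : Continuous arctanUnit := by
  unfold arctanUnit; fun_prop

theorem measurable_tanUnit : Measurable tanUnit := by
  have : tanUnit = fun s => sin (π * (s - 1 / 2)) / cos (π * (s - 1 / 2)) :=
    funext fun s => tan_eq_sin_div_cos _
  rw [this]
  fun_prop

theorem measurableEmbedding_const_mul_arctanUnit {δ : ℝ} (hδ : δ ≠ 0) :
    MeasurableEmbedding fun u => δ * arctanUnit u :=
  (continuous_const.mul continuous_arctanUnit).measurable.measurableEmbedding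
    fun _ _ h => tanUnit_arctanUnit.injective (mul_left_cancel₀ hδ h)

/-- for every δ > 0 there are Borel maps ψ_δ : ℝ → (0,δ) (a Borel
isomorphism onto its image) and φ_δ(x) = max{δk : k ∈ ℤ, δk ≤ x} = δ⌊x/δ⌋ such that
y_δ(u,v) := φ_δ(v) + ψ_δ(u) encodes u measurably (∃ Borel ρ with ρ(y_δ(u,v)) = u)
and satisfies |y_δ(u,v) - v| ≤ δ for all u, v. -/
theorem discretization_encoding (δ : ℝ) (hδ : 0 < δ) :
    ∃ ψ φ : ℝ → ℝ,
      MeasurableEmbedding ψ ∧ (∀ u, ψ u ∈ Set.Ioo 0 δ) ∧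
      (∀ x, φ x = δ * (⌊x / δ⌋ : ℤ)) ∧
      (∀ x, φ x ∈ {y : ℝ | ∃ k : ℤ, y = δ * k} ∧ φ x ≤ x ∧
        ∀ k : ℤ, (δ * k : ℝ) ≤ x → (δ * k : ℝ) ≤ φ x) ∧
      (∃ ρ : ℝ → ℝ, Measurable ρ ∧ ∀ u v, ρ (φ v + ψ u) = u) ∧
      (∀ u v, |φ v + ψ u - v| ≤ δ) := by
  refine ⟨fun u => δ * arctanUnit u, fun x => δ * ⌊x / δ⌋,
    measurableEmbedding_const_mul_arctanUnit hδ.ne', fun u => ?_, fun _ => rfl,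
    fun x => ⟨⟨_, rfl⟩, mul_floor_div_le hδ x, fun _ => mul_intCast_le_mul_floor_div hδ⟩,
    ⟨fun y => tanUnit (Int.fract (y / δ)),
      measurable_tanUnit.comp (measurable_id.div_const δ).fract, fun u v => ?_⟩,
    fun u v =>
      abs_mul_floor_div_add_mul_sub_le hδ v (Ioo_subset_Icc_self (arctanUnit_mem_Ioo u))⟩
  · obtain ⟨h₀, h₁⟩ := arctanUnit_mem_Ioo u
    exact ⟨mul_pos hδ h₀, mul_lt_of_lt_one_right hδ h₁⟩
  · dsimp only
    rw [fract_mul_intCast_add_mul_div hδ.ne' _ (Ioo_subset_Ico_self (arctanUnit_mem_Ioo u)),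
      tanUnit_arctanUnit u]
end
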